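/- There exists a circulant weighing matrix CW(99, 25); that is, there exists a vector a ∈ {0, 1, −1}^{99} such that the circulant matrix W = c(a) satisfies W Wᵀ = 25 I, where I is the 99×99 identity matrix. -/

import Mathlib

/-!
The `(i, j)` entry of `c(a) c(a)ᵀ` is the periodic autocorrelation of `a` at shift `i - j`, so a
circulant weighing matrix `CW(n, k)` is the same thing as a `{0, ±1}`-sequence of length `n` whose
periodic autocorrelation is `k` at shift `0` and vanishes at every other shift. For `n = 99`,
`k = 25` it then suffices to check the autocorrelation of one explicit sequence by computation.
-/

open Matrix

/-- The circulant matrix `c(a)` with entries `c(a)_{i,j} = a_{(j-i) mod n}`. -/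
def circ {n : ℕ} (a : Fin n → ℝ) : Matrix (Fin n) (Fin n) ℝ :=
  Matrix.of fun i j => a (j - i)

def periodicAutocorr {R : Type*} [Semiring R] {n : ℕ} (a : Fin n → R) (d : Fin n) : R :=
  ∑ t, a t * a (t + d)

lemma map_periodicAutocorr {R S : Type*} [Semiring R] [Semiring S] (f : R →+* S) {n : ℕ}
    (a : Fin n → R) (d : Fin n) : periodicAutocorr (f ∘ a) d = f (periodicAutocorr a d) := by
  simp [periodicAutocorr, map_sum]

lemma circ_mul_transpose_apply {n : ℕ} [NeZero n] (a : Fin n → ℝ) (i j : Fin n) :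
    (circ a * (circ a)ᵀ) i j = periodicAutocorr a (i - j) := by
  simp only [circ, mul_apply, transpose_apply, of_apply, periodicAutocorr]
  exact Fintype.sum_equiv (Equiv.subRight i) _ _ fun k => by simp

lemma circ_mul_transpose_eq_smul_one {n : ℕ} [NeZero n] (a : Fin n → ℝ) (c : ℝ)
    (h : ∀ d, periodicAutocorr a d = if d = 0 then c else 0) :
    circ a * (circ a)ᵀ = c • (1 : Matrix (Fin n) (Fin n) ℝ) := by
  ext i j
  rw [circ_mul_transpose_apply, h, Matrix.smul_apply, one_apply]
  simp [sub_eq_zero]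

/-- Supported on multiples of `3`: the threefold dilation of a `CW(33, 25)`. -/
def cw99List : List ℤ :=
  [0, 0, 0, 1, 0, 0, -1, 0, 0, -1, 0, 0, 1, 0, 0, 1, 0, 0, 0, 0, 0, -1, 0, 0,
   -1, 0, 0, -1, 0, 0, -1, 0, 0, 0, 0, 0, -1, 0, 0, -1, 0, 0, 1, 0, 0, -1, 0,
   0, 1, 0, 0, -1, 0, 0, 0, 0, 0, -1, 0, 0, 1, 0, 0, 0, 0, 0, 0, 0, 0, 1, 0,
   0, 0, 0, 0, 1, 0, 0, 1, 0, 0, -1, 0, 0, -1, 0, 0, -1, 0, 0, 0, 0, 0, 1, 0,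
   0, -1, 0, 0]

def cw99 (i : Fin 99) : ℤ := cw99List.getD i 0

lemma cw99_eq_zero_or_one_or_neg_one : ∀ i, cw99 i = 0 ∨ cw99 i = 1 ∨ cw99 i = -1 := by
  decide

set_option maxRecDepth 10000 in
lemma periodicAutocorr_cw99 : ∀ d, periodicAutocorr cw99 d = if d = 0 then 25 else 0 := by
  decide

/-- There exists a circulant weighing matrix `CW(99, 25)`. -/
theorem exists_CW_99_25 :
    ∃ a : Fin 99 → ℝ, (∀ s, a s ∈ ({0, 1, -1} : Set ℝ)) ∧
      circ a * (circ a)ᵀ = (25 : ℝ) • (1 : Matrix (Fin 99) (Fin 99) ℝ) := by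
  refine ⟨Int.castRingHom ℝ ∘ cw99, fun s => ?_, circ_mul_transpose_eq_smul_one _ _ fun d => ?_⟩
  · rcases cw99_eq_zero_or_one_or_neg_one s with h | h | h <;> simp [h]
  · rw [map_periodicAutocorr, periodicAutocorr_cw99]
    split_ifs <;> simp
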